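/- For any prime p and positive integers m, t, the number of monomials x_0^{e_0}···x_m^{e_m} of total degree t whose multinomial coefficient t!/(e_0!···e_m!) is divisible by p equals C(m+t, t) − Π_λ C(m + t_λ, t_λ), where t_λ are the base-p digits of t. This quantity is 0 if and only if (t < p) or (m ≤ 1 and all digits t_0,...,t_{J−1} of t equal p−1, J being the top digit position) — i.e., iff m = 1 and t = t_J p^J − 1, or t < p. -/

import Mathlib

/-!
By Legendre's formula, `(p - 1) · v_p` of a multinomial coefficient `(e₀ + ⋯ + e_m)! / ∏ eᵢ!` is the
loss of base-`p` digit sum `∑ s_p(eᵢ) - s_p(∑ eᵢ)`, so `p` does not divide it exactly when the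
base-`p` addition of the `eᵢ` has no carries (Kummer). Splitting off the last digit of every part,
`e ↦ (e % p, e / p)`, is then a bijection between the compositions of `t` with multinomial
coefficient prime to `p` and the pairs (composition of `t₀`, such composition of `t / p`), so by
stars and bars there are `∏_λ C(m + t_λ, t_λ)` of them.

For the vanishing criterion: when `m ≥ 2` and `t ≥ p` the composition `(1, p - 1, t - p, 0, …)`
carries; when `m = 1` the count `∏ (t_λ + 1)` is at most `t + 1`, with equality iff all digits
below the top one are `p - 1`.
-/

open Finset
open scoped Nat

def notDvdMultinomialTuples (p k n : ℕ) : Finset (Fin k → ℕ) :=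
  (Finset.Nat.antidiagonalTuple k n).filter fun e => ¬ p ∣ Nat.multinomial univ e

section

variable {p : ℕ}

theorem Nat.digits_sum_eq_mod_add_digits_sum_div (hp : 1 < p) (n : ℕ) :
    (p.digits n).sum = n % p + (p.digits (n / p)).sum := by
  rcases n.eq_zero_or_pos with rfl | hn
  · simp
  · simp [Nat.digits_def' hp hn]

theorem Nat.digits_sum_of_lt (hp : 1 < p) {n : ℕ} (hn : n < p) : (p.digits n).sum = n := by
  simp [Nat.digits_sum_eq_mod_add_digits_sum_div hp n, Nat.mod_eq_of_lt hn, Nat.div_eq_of_lt hn]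

theorem Nat.digits_sum_add_sub_one_mul_padicValNat_factorial (hp : p.Prime) (n : ℕ) :
    (p.digits n).sum + (p - 1) * padicValNat p n ! = n := by
  have := Fact.mk hp
  have := Nat.digit_sum_le p n
  rw [sub_one_mul_padicValNat_factorial]
  omega

theorem Nat.digits_sum_add_sub_one_mul_padicValNat_multinomial (hp : p.Prime) {ι : Type*}
    (s : Finset ι) (f : ι → ℕ) :
    (p.digits (∑ i ∈ s, f i)).sum + (p - 1) * padicValNat p (Nat.multinomial s f) =
      ∑ i ∈ s, (p.digits (f i)).sum := by
  have hval : padicValNat p (∑ i ∈ s, f i)! =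
      ∑ i ∈ s, padicValNat p (f i)! + padicValNat p (Nat.multinomial s f) := by
    simp only [← Nat.factorization_def _ hp]
    rw [← Nat.multinomial_spec, Nat.factorization_mul (by positivity)
      (Nat.multinomial_pos s f).ne', Finsupp.add_apply,
      Nat.factorization_prod fun i _ => (Nat.factorial_pos (f i)).ne', Finset.sum_apply']
  have hsum : ∑ i ∈ s, ((p.digits (f i)).sum + (p - 1) * padicValNat p (f i)!) = ∑ i ∈ s, f i :=
    Finset.sum_congr rfl fun i _ => Nat.digits_sum_add_sub_one_mul_padicValNat_factorial hp (f i)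
  have htot := Nat.digits_sum_add_sub_one_mul_padicValNat_factorial hp (∑ i ∈ s, f i)
  rw [Finset.sum_add_distrib, ← Finset.mul_sum] at hsum
  rw [hval, mul_add] at htot
  omega

theorem Nat.not_dvd_multinomial_iff_digits_sum (hp : p.Prime) {ι : Type*} (s : Finset ι)
    (f : ι → ℕ) :
    ¬ p ∣ Nat.multinomial s f ↔
      ∑ i ∈ s, (p.digits (f i)).sum = (p.digits (∑ i ∈ s, f i)).sum := by
  have := Fact.mk hp
  rw [dvd_iff_padicValNat_ne_zero (Nat.multinomial_pos s f).ne', not_not,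
    ← Nat.digits_sum_add_sub_one_mul_padicValNat_multinomial hp]
  have := hp.two_le
  constructor
  · intro h; simp [h]
  · intro h
    have : (p - 1) * padicValNat p (Nat.multinomial s f) = 0 := by omega
    simpa [show p - 1 ≠ 0 by omega] using this

theorem Nat.digits_sum_sum_le (hp : p.Prime) {ι : Type*} (s : Finset ι) (f : ι → ℕ) :
    (p.digits (∑ i ∈ s, f i)).sum ≤ ∑ i ∈ s, (p.digits (f i)).sum :=
  (Nat.digits_sum_add_sub_one_mul_padicValNat_multinomial hp s f).symm ▸ Nat.le_add_right _ _

theorem Nat.digits_sum_add_le (hp : p.Prime) (a b : ℕ) :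
    (p.digits (a + b)).sum ≤ (p.digits a).sum + (p.digits b).sum := by
  simpa using Nat.digits_sum_sum_le hp univ ![a, b]

section Carry

variable {ι : Type*} (s : Finset ι) (f : ι → ℕ)

theorem Finset.sum_mod_add_mul_sum_div (p : ℕ) :
    ∑ i ∈ s, f i % p + p * ∑ i ∈ s, f i / p = ∑ i ∈ s, f i := by
  rw [Finset.mul_sum, ← Finset.sum_add_distrib]
  exact Finset.sum_congr rfl fun i _ => Nat.mod_add_div (f i) p

/-- Kummer's criterion, one digit at a time: the last digits of the `f i` add without carry. -/
theorem Nat.not_dvd_multinomial_iff_mod_div (hp : p.Prime) :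
    ¬ p ∣ Nat.multinomial s f ↔
      ∑ i ∈ s, f i % p = (∑ i ∈ s, f i) % p ∧ ¬ p ∣ Nat.multinomial s (fun i => f i / p) := by
  have hp1 := hp.one_lt
  have hT := Finset.sum_mod_add_mul_sum_div s f p
  set T := ∑ i ∈ s, f i
  obtain ⟨c, hc⟩ : ∃ c, ∑ i ∈ s, f i % p = T % p + p * c := by
    refine ⟨(∑ i ∈ s, f i % p) / p, ?_⟩
    rw [← hT, Nat.add_mul_mod_self_left, Nat.mod_add_div]
  have hdiv : T / p = ∑ i ∈ s, f i / p + c := by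
    refine Nat.eq_of_mul_eq_mul_left hp.pos ?_
    have := Nat.mod_add_div T p
    rw [mul_add]
    omega
  have hsumf : ∑ i ∈ s, (p.digits (f i)).sum =
      ∑ i ∈ s, f i % p + ∑ i ∈ s, (p.digits (f i / p)).sum := by
    rw [← Finset.sum_add_distrib]
    exact Finset.sum_congr rfl fun i _ => Nat.digits_sum_eq_mod_add_digits_sum_div hp1 (f i)
  have hcarry : (p.digits (∑ i ∈ s, f i / p + c)).sum ≤ ∑ i ∈ s, (p.digits (f i / p)).sum + c :=
    (Nat.digits_sum_add_le hp _ c).trans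
      (add_le_add (Nat.digits_sum_sum_le hp s _) (Nat.digit_sum_le p c))
  have hpc : 2 * c ≤ p * c := Nat.mul_le_mul_right c hp.two_le
  rw [Nat.not_dvd_multinomial_iff_digits_sum hp, Nat.not_dvd_multinomial_iff_digits_sum hp,
    hsumf, Nat.digits_sum_eq_mod_add_digits_sum_div hp1 T, hdiv]
  constructor
  · intro h
    obtain rfl : c = 0 := by omega
    simp only [add_zero] at h ⊢
    omega
  · rintro ⟨h, hq⟩
    obtain rfl : c = 0 := by omega
    rw [add_zero, h, hq]

end Carry

theorem Finset.Nat.card_antidiagonalTuple_succ (k n : ℕ) :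
    #(Finset.Nat.antidiagonalTuple (k + 1) n) = (k + n).choose n := by
  classical
  rw [← piAntidiag_univ_fin_eq_antidiagonalTuple, ← card_attach, ← card_map, ← finsuppAntidiag,
    card_finsuppAntidiag_nat_eq_choose, Finset.card_univ, Fintype.card_fin, Nat.add_right_comm,
    Nat.add_sub_cancel]

theorem Nat.not_dvd_multinomial_of_sum_lt (hp : p.Prime) {ι : Type*} (s : Finset ι)
    (f : ι → ℕ) (hf : ∑ i ∈ s, f i < p) : ¬ p ∣ Nat.multinomial s f := fun h =>
  hf.not_ge <| (Nat.Prime.dvd_factorial hp).mp <|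
    h.trans (Dvd.intro_left _ (Nat.multinomial_spec s f))

theorem mem_notDvdMultinomialTuples {k n : ℕ} {e : Fin k → ℕ} :
    e ∈ notDvdMultinomialTuples p k n ↔ ∑ i, e i = n ∧ ¬ p ∣ Nat.multinomial univ e := by
  simp [notDvdMultinomialTuples, Finset.Nat.mem_antidiagonalTuple]

theorem card_notDvdMultinomialTuples_eq_mul (hp : p.Prime) (k n : ℕ) :
    #(notDvdMultinomialTuples p k n) =
      #(Finset.Nat.antidiagonalTuple k (n % p)) * #(notDvdMultinomialTuples p k (n / p)) := by
  have hp0 := hp.pos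
  have hlt : ∀ r : Fin k → ℕ, ∑ i, r i = n % p → ∀ i, r i < p := fun r hr i =>
    (hr ▸ Finset.single_le_sum (fun j _ => Nat.zero_le (r j)) (mem_univ i)).trans_lt
      (Nat.mod_lt n hp0)
  rw [← card_product]
  refine card_nbij' (fun e => (fun i => e i % p, fun i => e i / p))
    (fun rq i => rq.1 i + p * rq.2 i) ?_ ?_ ?_ ?_
  · intro e he
    simp only [coe_product, Set.mem_prod, mem_coe, mem_notDvdMultinomialTuples,
      Finset.Nat.mem_antidiagonalTuple] at he ⊢
    obtain ⟨hsum, hndvd⟩ := he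
    rw [Nat.not_dvd_multinomial_iff_mod_div univ e hp, hsum] at hndvd
    refine ⟨hndvd.1, ?_, hndvd.2⟩
    have := Finset.sum_mod_add_mul_sum_div univ e p
    have := Nat.mod_add_div n p
    exact Nat.eq_of_mul_eq_mul_left hp0 (by omega)
  · rintro ⟨r, q⟩ hrq
    simp only [coe_product, Set.mem_prod, mem_coe, mem_notDvdMultinomialTuples,
      Finset.Nat.mem_antidiagonalTuple] at hrq ⊢
    obtain ⟨hr, hq, hndvd⟩ := hrq
    have hsum : ∑ i, (r i + p * q i) = n := by
      rw [Finset.sum_add_distrib, ← Finset.mul_sum, hr, hq, Nat.mod_add_div]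
    refine ⟨hsum, ?_⟩
    rw [Nat.not_dvd_multinomial_iff_mod_div univ _ hp, hsum]
    simp only [Nat.add_mul_mod_self_left, Nat.add_mul_div_left _ _ hp0,
      Nat.mod_eq_of_lt (hlt r hr _), Nat.div_eq_of_lt (hlt r hr _), zero_add]
    exact ⟨hr, hndvd⟩
  · intro e _
    funext i
    exact Nat.mod_add_div (e i) p
  · rintro ⟨r, q⟩ hrq
    simp only [coe_product, Set.mem_prod, mem_coe, Finset.Nat.mem_antidiagonalTuple] at hrq
    simp only [Nat.add_mul_mod_self_left, Nat.add_mul_div_left _ _ hp0,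
      Nat.mod_eq_of_lt (hlt r hrq.1 _), Nat.div_eq_of_lt (hlt r hrq.1 _), zero_add]

theorem card_notDvdMultinomialTuples (hp : p.Prime) (m n : ℕ) :
    #(notDvdMultinomialTuples p (m + 1) n) = ((p.digits n).map fun d => (m + d).choose d).prod := by
  induction n using Nat.strong_induction_on with
  | _ n ih =>
    rcases n.eq_zero_or_pos with rfl | hn
    · have h0 := Nat.not_dvd_multinomial_of_sum_lt hp univ (0 : Fin (m + 1) → ℕ) (by simp [hp.pos])
      rw [notDvdMultinomialTuples, Finset.Nat.antidiagonalTuple_zero_right, filter_singleton,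
        if_pos h0]
      simp
    · rw [card_notDvdMultinomialTuples_eq_mul hp, Finset.Nat.card_antidiagonalTuple_succ,
        ih _ (Nat.div_lt_self hn hp.one_lt), Nat.digits_def' hp.one_lt hn, List.map_cons,
        List.prod_cons]

theorem List.prod_map_eq_prod_range_getD {α M : Type*} [CommMonoid M] (f : α → M) {d : α}
    (hd : f d = 1) {K : ℕ} {L : List α} (hL : L.length ≤ K) :
    (L.map f).prod = ∏ l ∈ Finset.range K, f (L.getD l d) := by
  induction L generalizing K with
  | nil => simp [hd]
  | cons a L ih =>
    obtain ⟨K, rfl⟩ : ∃ K', K = K' + 1 := ⟨K - 1, by simp at hL; omega⟩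
    rw [Finset.prod_range_succ', List.map_cons, List.prod_cons, ih (by simpa using hL), mul_comm]
    simp

theorem Nat.prod_map_digits_add_one_le (hp : 1 < p) (n : ℕ) :
    ((p.digits n).map (· + 1)).prod ≤ n + 1 := by
  induction n using Nat.strong_induction_on with
  | _ n ih =>
    rcases n.eq_zero_or_pos with rfl | hn
    · simp
    · rw [Nat.digits_def' hp hn, List.map_cons, List.prod_cons]
      have hq := ih (n / p) (Nat.div_lt_self hn hp)
      have hr := Nat.mod_lt n (by omega : 0 < p)
      have := Nat.mod_add_div n p
      have := Nat.mul_le_mul_right (n / p) hr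
      calc (n % p + 1) * ((p.digits (n / p)).map (· + 1)).prod
          ≤ (n % p + 1) * (n / p + 1) := Nat.mul_le_mul_left _ hq
        _ ≤ n + 1 := by nlinarith

theorem List.forall_getD_cons_iff {α : Type*} {a x d : α} {L : List α} (hL : 0 < L.length) :
    (∀ l, l + 1 < (a :: L).length → (a :: L).getD l d = x) ↔
      a = x ∧ ∀ l, l + 1 < L.length → L.getD l d = x := by
  constructor
  · intro h
    exact ⟨h 0 (by simpa using hL), fun l hl => h (l + 1) (by simpa using hl)⟩
  · rintro ⟨h0, h⟩ (_ | l) hl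
    · exact h0
    · exact h l (by simpa using hl)

theorem Nat.prod_map_digits_add_one_eq_iff (hp : 1 < p) (n : ℕ) :
    ((p.digits n).map (· + 1)).prod = n + 1 ↔
      ∀ l, l + 1 < (p.digits n).length → (p.digits n).getD l 0 = p - 1 := by
  induction n using Nat.strong_induction_on with
  | _ n ih =>
    rcases n.eq_zero_or_pos with rfl | hn
    · simp
    rcases (n / p).eq_zero_or_pos with hq0 | hq
    · have hn' : n < p := by rwa [Nat.div_eq_zero_iff_lt (by omega)] at hq0
      simp [Nat.digits_of_lt p n hn.ne' hn']
    · have hlen : 0 < (p.digits (n / p)).length :=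
        List.length_pos_iff.mpr (Nat.digits_ne_nil_iff_ne_zero.mpr hq.ne')
      have hle := Nat.prod_map_digits_add_one_le hp (n / p)
      have hr := Nat.mod_lt n (by omega : 0 < p)
      have hdiv := Nat.mod_add_div n p
      rw [Nat.digits_def' hp hn, List.map_cons, List.prod_cons]
      rw [List.forall_getD_cons_iff hlen, ← ih (n / p) (Nat.div_lt_self hn hp)]
      generalize ((p.digits (n / p)).map (· + 1)).prod = P at hle ⊢
      constructor
      · intro h
        have hP : P = n / p + 1 := by
          by_contra hne
          have : (n % p + 1) * P ≤ (n % p + 1) * (n / p) := Nat.mul_le_mul_left _ (by omega)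
          nlinarith
        refine ⟨?_, hP⟩
        rw [hP] at h
        have : (n % p + 1) * (n / p) = p * (n / p) := by nlinarith
        have := Nat.eq_of_mul_eq_mul_right hq this
        omega
      · rintro ⟨h0, hP⟩
        rw [hP, h0, Nat.sub_add_cancel hp.le, mul_add, mul_one]
        omega

theorem Nat.exists_dvd_multinomial_of_le (hp : p.Prime) {m n : ℕ} (hm : 2 ≤ m) (hn : p ≤ n) :
    ∃ e ∈ Finset.Nat.antidiagonalTuple (m + 1) n, p ∣ Nat.multinomial univ e := by
  obtain ⟨k, rfl⟩ : ∃ k, m = k + 2 := ⟨m - 2, by omega⟩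
  have hp1 := hp.one_lt
  -- `1 + (p - 1)` already carries in the last digit
  let e : Fin (k + 2 + 1) → ℕ := Fin.cons 1 (Fin.cons (p - 1) (Fin.cons (n - p) 0))
  have he : ∑ i, e i = n := by simp [e, Fin.sum_cons]; omega
  refine ⟨e, Finset.Nat.mem_antidiagonalTuple.mpr he, not_not.mp fun hndvd => ?_⟩
  rw [Nat.not_dvd_multinomial_iff_digits_sum hp, he] at hndvd
  have hsub := Nat.digits_sum_add_le hp (n - p) p
  rw [Nat.sub_add_cancel hn, Nat.digits_sum_eq_mod_add_digits_sum_div hp1 p, Nat.mod_self,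
    Nat.div_self hp.pos, Nat.digits_sum_of_lt hp1 hp1] at hsub
  simp [e, Fin.sum_univ_succ, Nat.digits_sum_of_lt hp1 hp1,
    Nat.digits_sum_of_lt hp1 (show p - 1 < p by omega)] at hndvd
  omega

end

theorem stmt14_general (p : ℕ) (hp : p.Prime) (t m : ℕ) (hm : 1 ≤ m) :
    ((Finset.Nat.antidiagonalTuple (m + 1) t).filter
        (fun e => p ∣ Nat.multinomial Finset.univ e)).card
      = (m + t).choose t
          - ∏ l ∈ Finset.range (t + 1),
              (m + (Nat.digits p t).getD l 0).choose ((Nat.digits p t).getD l 0) ∧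
    (((Finset.Nat.antidiagonalTuple (m + 1) t).filter
        (fun e => p ∣ Nat.multinomial Finset.univ e)).card = 0 ↔
      t < p ∨ (m = 1 ∧ ∀ l, l + 1 < (Nat.digits p t).length →
        (Nat.digits p t).getD l 0 = p - 1)) := by
  have hp1 := hp.one_lt
  have hsplit := card_filter_add_card_filter_not (s := Finset.Nat.antidiagonalTuple (m + 1) t)
    (fun e => p ∣ Nat.multinomial univ e)
  rw [← notDvdMultinomialTuples, card_notDvdMultinomialTuples hp,
    Finset.Nat.card_antidiagonalTuple_succ] at hsplit
  have hlen : (p.digits t).length ≤ t + 1 := (Nat.digits_length_le_iff hp1 t).mpr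
    ((Nat.lt_pow_self hp1).trans (Nat.pow_lt_pow_right hp1 (lt_add_one t)))
  refine ⟨?_, ?_⟩
  · rw [← List.prod_map_eq_prod_range_getD (fun d => (m + d).choose d) (d := 0)
      (Nat.choose_zero_right m) hlen]
    omega
  rcases lt_or_ge t p with htp | hpt
  · simp only [htp, true_or, iff_true, card_eq_zero, filter_eq_empty_iff]
    exact fun e he => Nat.not_dvd_multinomial_of_sum_lt hp _ _
      ((Finset.Nat.mem_antidiagonalTuple.mp he).symm ▸ htp)
  obtain rfl | hm2 : m = 1 ∨ 2 ≤ m := by omega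
  · have hchoose : ∀ d, (1 + d).choose d = d + 1 := fun d => by
      rw [add_comm, Nat.choose_succ_self_right]
    simp only [hchoose] at hsplit
    have := Nat.prod_map_digits_add_one_le hp1 t
    simp only [hpt.not_gt, false_or, true_and, ← Nat.prod_map_digits_add_one_eq_iff hp1]
    omega
  · obtain ⟨e, he, hdvd⟩ := Nat.exists_dvd_multinomial_of_le hp hm2 hpt
    simp only [hpt.not_gt, false_or, show m ≠ 1 by omega, false_and, iff_false]
    exact card_ne_zero_of_mem (mem_filter.mpr ⟨he, hdvd⟩)

/-- The number of degree-t monomials in m+1 variables whose multinomial coefficient is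
divisible by p is C(m+t,t) − Π_λ C(m+t_λ,t_λ); it vanishes iff t < p, or m = 1 and all
base-p digits of t below the top position equal p − 1 (i.e. t = t_J·p^J − 1). -/
theorem stmt14 (p : ℕ) (hp : p.Prime) (t m : ℕ) (ht : 1 ≤ t) (hm : 1 ≤ m) :
    ((Finset.Nat.antidiagonalTuple (m + 1) t).filter
        (fun e => p ∣ Nat.multinomial Finset.univ e)).card
      = (m + t).choose t
          - ∏ l ∈ Finset.range (t + 1),
              (m + (Nat.digits p t).getD l 0).choose ((Nat.digits p t).getD l 0) ∧
    (((Finset.Nat.antidiagonalTuple (m + 1) t).filter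
        (fun e => p ∣ Nat.multinomial Finset.univ e)).card = 0 ↔
      t < p ∨ (m = 1 ∧ ∀ l, l + 1 < (Nat.digits p t).length →
        (Nat.digits p t).getD l 0 = p - 1)) :=
  stmt14_general p hp t m hm
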